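/- Let M be any probability distribution on {0,1}^{n+2} with d_TV(M, M_s) ≤ ε for some s ∈ {0,1}^n and ε ≥ 0. Call x ∈ {0,1}^n 'bad' if M(x, ¬χ_s(x), |x|+¬χ_s(x) mod 2) ≥ M(x, χ_s(x), |x|+χ_s(x) mod 2). Then the number of bad x is at most 2ε·2^n. Consequently, for uniformly random x, comparing the evaluator values M(x,0,|x|) and M(x,1,|x|+1) recovers χ_s(x) except with probability at most 2ε. -/
import Mathlib


/-- The parity function `χ_s(x) = x · s mod 2`. -/
def chi {n : ℕ} (s x : Fin n → ZMod 2) : ZMod 2 := ∑ i, s i * x i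

/-- The parity `|x|` of a bitstring: the sum of its bits mod 2. -/
def par {n : ℕ} (x : Fin n → ZMod 2) : ZMod 2 := ∑ i, x i

/-- The fermionized parity distribution `M_s` on `{0,1}^{n+2}`:
`M_s(x,y,z) = 2^{-n}` if `χ_s(x) = y` and `|x| + y = z`, and `0` otherwise. -/
noncomputable def Mdist {n : ℕ} (s : Fin n → ZMod 2) (x : Fin n → ZMod 2) (y z : ZMod 2) : ℝ :=
  if chi s x = y ∧ par x + y = z then ((2 : ℝ) ^ n)⁻¹ else 0

lemma sum_zmod2 (g : ZMod 2 → ℝ) (a : ZMod 2) : ∑ y : ZMod 2, g y = g a + g (a + 1) := by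
  have h : ∑ y : ZMod 2, g y = g 0 + g 1 := Fin.sum_univ_two g
  fin_cases a
  · exact h
  · rw [h]; show g 0 + g 1 = g 1 + g (1 + 1)
    rw [show ((1:ZMod 2) + 1) = 0 from rfl]; ring

lemma two_terms (g : ZMod 2 → ZMod 2 → ℝ) (hg : ∀ y z, 0 ≤ g y z) (a b b' : ZMod 2) :
    g a b + g (a + 1) b' ≤ ∑ y : ZMod 2, ∑ z : ZMod 2, g y z := by
  rw [sum_zmod2 (fun y => ∑ z : ZMod 2, g y z) a]
  have h1 : g a b ≤ ∑ z : ZMod 2, g a z :=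
    Finset.single_le_sum (fun z _ => hg a z) (Finset.mem_univ b)
  have h2 : g (a + 1) b' ≤ ∑ z : ZMod 2, g (a + 1) z :=
    Finset.single_le_sum (fun z _ => hg (a + 1) z) (Finset.mem_univ b')
  linarith

/-- Recovering the parity function from an approximate evaluator: if `M` is a
probability distribution on `{0,1}^{n+2}` with `d_TV(M, M_s) ≤ ε`, and `x` is called
*bad* when `M(x, ¬χ_s(x), |x| + ¬χ_s(x)) ≥ M(x, χ_s(x), |x| + χ_s(x))`, then there are
at most `2ε·2^n` bad strings `x`. Hence comparing `M(x,0,|x|)` and `M(x,1,|x|+1)`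
recovers `χ_s(x)` for a uniformly random `x` except with probability at most `2ε`.
(In `ZMod 2`, `¬b = b + 1`.) -/
theorem bad_count_Mdist (n : ℕ) (s : Fin n → ZMod 2) (ε : ℝ) (hε : 0 ≤ ε)
    (M : (Fin n → ZMod 2) → ZMod 2 → ZMod 2 → ℝ)
    (hM0 : ∀ x y z, 0 ≤ M x y z)
    (hM1 : (∑ x : Fin n → ZMod 2, ∑ y : ZMod 2, ∑ z : ZMod 2, M x y z) = 1)
    (hTV : (1 / 2 : ℝ) * (∑ x : Fin n → ZMod 2, ∑ y : ZMod 2, ∑ z : ZMod 2,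
      |M x y z - Mdist s x y z|) ≤ ε) :
    ((Finset.univ.filter (fun x : Fin n → ZMod 2 =>
        M x (chi s x) (par x + chi s x) ≤
          M x (chi s x + 1) (par x + (chi s x + 1)))).card : ℝ)
      ≤ 2 * ε * 2 ^ n := by
  set f : (Fin n → ZMod 2) → ℝ :=
    fun x => ∑ y : ZMod 2, ∑ z : ZMod 2, |M x y z - Mdist s x y z| with hf
  set T := Finset.univ.filter (fun x : Fin n → ZMod 2 =>
        M x (chi s x) (par x + chi s x) ≤
          M x (chi s x + 1) (par x + (chi s x + 1))) with hT
  have hpow : (0:ℝ) < (2:ℝ) ^ n := by positivity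
  have key : ∀ x ∈ T, ((2:ℝ) ^ n)⁻¹ ≤ f x := by
    intro x hx
    rw [hT, Finset.mem_filter] at hx
    have hbad := hx.2
    have h2 := two_terms (fun y z => |M x y z - Mdist s x y z|)
      (fun y z => abs_nonneg _) (chi s x) (par x + chi s x) (par x + (chi s x + 1))
    have e1 : Mdist s x (chi s x) (par x + chi s x) = ((2:ℝ) ^ n)⁻¹ := by
      simp [Mdist]
    have e2 : Mdist s x (chi s x + 1) (par x + (chi s x + 1)) = 0 := by
      have : chi s x ≠ chi s x + 1 := by
        intro h; have := left_eq_add.mp h; simp at this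
      simp [Mdist, this]
    rw [e1, e2] at h2
    have hA : ((2:ℝ) ^ n)⁻¹ - M x (chi s x) (par x + chi s x) ≤
        |M x (chi s x) (par x + chi s x) - ((2:ℝ) ^ n)⁻¹| := by
      rw [abs_sub_comm]; exact le_abs_self _
    have hB : M x (chi s x + 1) (par x + (chi s x + 1)) ≤
        |M x (chi s x + 1) (par x + (chi s x + 1)) - 0| := by
      rw [sub_zero]; exact le_abs_self _
    have hMc := hM0 x (chi s x) (par x + chi s x)
    simp only [hf]
    linarith
  have hsum1 : (T.card : ℝ) * ((2:ℝ) ^ n)⁻¹ ≤ ∑ x ∈ T, f x := by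
    calc (T.card : ℝ) * ((2:ℝ) ^ n)⁻¹ = ∑ _x ∈ T, ((2:ℝ) ^ n)⁻¹ := by
          rw [Finset.sum_const, nsmul_eq_mul]
      _ ≤ ∑ x ∈ T, f x := Finset.sum_le_sum key
  have hsum2 : ∑ x ∈ T, f x ≤ ∑ x : Fin n → ZMod 2, f x :=
    Finset.sum_le_sum_of_subset_of_nonneg (Finset.subset_univ T)
      (fun x _ _ => Finset.sum_nonneg fun y _ => Finset.sum_nonneg fun z _ => abs_nonneg _)
  have hsum3 : ∑ x : Fin n → ZMod 2, f x ≤ 2 * ε := by linarith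
  have : (T.card : ℝ) * ((2:ℝ) ^ n)⁻¹ ≤ 2 * ε := by linarith
  calc (T.card : ℝ) = (T.card : ℝ) * ((2:ℝ) ^ n)⁻¹ * (2:ℝ) ^ n := by
        field_simp
    _ ≤ 2 * ε * 2 ^ n := by
        apply mul_le_mul_of_nonneg_right this (le_of_lt hpow)
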